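/- For any finite nonempty family of pairs of reals (p_i, q_i), i ∈ {1,…,K}, we have (1/2)·(min_i max(p_i, q_i) + max_i min(p_i, q_i)) ≤ max_i (p_i + q_i)/2. (This is the main theorem: the winning rate of the stronger player under the pie rule, w_rdr+pr, is at most the winning rate under the best fixed first move, max_i w_rdr+gfm,i.) -/
import Mathlib

theorem pie_rule_le_best_fixed_move
    {ι : Type*} [Fintype ι] [Nonempty ι] (p q : ι → ℝ) :
    (1/2) * (Finset.univ.inf' Finset.univ_nonempty (fun i => max (p i) (q i))
      + Finset.univ.sup' Finset.univ_nonempty (fun i => min (p i) (q i)))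
    ≤ Finset.univ.sup' Finset.univ_nonempty (fun i => (p i + q i) / 2) := by
  obtain ⟨j, hj, hje⟩ := Finset.exists_mem_eq_sup' Finset.univ_nonempty
    (fun i => min (p i) (q i))
  have h1 : Finset.univ.inf' Finset.univ_nonempty (fun i => max (p i) (q i))
      ≤ max (p j) (q j) := Finset.inf'_le _ hj
  have h2 : (p j + q j) / 2 ≤ Finset.univ.sup' Finset.univ_nonempty
      (fun i => (p i + q i) / 2) := Finset.le_sup' (fun i => (p i + q i) / 2) hj
  have : max (p j) (q j) + min (p j) (q j) = p j + q j := max_add_min _ _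
  rw [hje]
  nlinarith [h1, h2, this]
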